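/- arXiv:2307.02719 — 6 statements merged into one kernel-verified Lean document; each statement's English description precedes it below -/
import Mathlib

section
/- If there exists a differentiable function l̃(θ) satisfying ∂l̃/∂θ = U(θ)·∂l/∂θ for all θ, where U is the uncertainty function and l the original loss, then the uncertainty-sampling update E_ξ[θ_{t+1} | θ_t] = θ_t − η_t·U(θ_t)·∇l(θ_t) equals the (expected) gradient descent update θ_t − η_t·∇l̃(θ_t). -/
open MeasureTheory

section UniformQuery

variable {E : Type*} [NormedAddCommGroup E] [NormedSpace ℝ E] [CompleteSpace E]

theorem setIntegral_Icc_zero_one_ite_le {a : ℝ} (ha : a ∈ Set.Icc (0 : ℝ) 1) (v : E) :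
    ∫ ξ in Set.Icc (0 : ℝ) 1, (if ξ ≤ a then v else 0) = a • v := by
  have hset : Set.Icc (0 : ℝ) 1 ∩ Set.Iic a = Set.Icc 0 a := by
    ext ξ
    simp only [Set.mem_inter_iff, Set.mem_Icc, Set.mem_Iic]
    constructor
    · exact fun ⟨⟨h0, _⟩, hξ⟩ => ⟨h0, hξ⟩
    · exact fun ⟨h0, hξ⟩ => ⟨⟨h0, hξ.trans ha.2⟩, hξ⟩
  calc ∫ ξ in Set.Icc (0 : ℝ) 1, (if ξ ≤ a then v else 0)
      = ∫ ξ in Set.Icc (0 : ℝ) 1, (Set.Iic a).indicator (fun _ => v) ξ := rfl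
    _ = a • v := by
        rw [setIntegral_indicator measurableSet_Iic, hset, setIntegral_const,
          Real.volume_real_Icc_of_le ha.1, sub_zero]

theorem setIntegral_Icc_zero_one_sub_ite_le {a : ℝ} (ha : a ∈ Set.Icc (0 : ℝ) 1) (θ v : E) :
    ∫ ξ in Set.Icc (0 : ℝ) 1, (θ - if ξ ≤ a then v else 0) = θ - a • v := by
  have hfin : volume (Set.Icc (0 : ℝ) 1) ≠ ⊤ := measure_Icc_lt_top.ne
  have hconst : IntegrableOn (fun _ : ℝ => θ) (Set.Icc 0 1) := integrableOn_const hfin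
  have hquery : IntegrableOn (fun ξ : ℝ => if ξ ≤ a then v else 0) (Set.Icc 0 1) :=
    (integrableOn_const hfin).indicator measurableSet_Iic
  rw [integral_sub hconst hquery, setIntegral_const, Real.volume_real_Icc_of_le zero_le_one,
    sub_zero, one_smul, setIntegral_Icc_zero_one_ite_le ha]

end UniformQuery

theorem stmt0_general {d : ℕ}
    (l ltil : EuclideanSpace ℝ (Fin d) → ℝ)
    (U : EuclideanSpace ℝ (Fin d) → ℝ)
    (hU : ∀ θ, U θ ∈ Set.Icc (0:ℝ) 1)
    (hgrad : ∀ θ, gradient ltil θ = U θ • gradient l θ) :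
    ∀ (θ : EuclideanSpace ℝ (Fin d)) (η : ℝ),
      (∫ ξ in Set.Icc (0:ℝ) 1,
        (θ - (if ξ ≤ U θ then η • gradient l θ else 0)))
        = θ - η • gradient ltil θ := by
  intro θ η
  rw [setIntegral_Icc_zero_one_sub_ite_le (hU θ), hgrad, smul_smul, smul_smul, mul_comm]

/-- If an equivalent loss `ltil` satisfies `∇ltil = U · ∇l`, then the expected
uncertainty-sampling update (querying with probability `U θ` via `ξ ~ Unif[0,1]`)
equals the gradient-descent update on `ltil`. -/
theorem stmt0 {d : ℕ}
    (l ltil : EuclideanSpace ℝ (Fin d) → ℝ)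
    (U : EuclideanSpace ℝ (Fin d) → ℝ)
    (hl : Differentiable ℝ l) (hltil : Differentiable ℝ ltil)
    (hU : ∀ θ, U θ ∈ Set.Icc (0:ℝ) 1)
    (hgrad : ∀ θ, gradient ltil θ = U θ • gradient l θ) :
    ∀ (θ : EuclideanSpace ℝ (Fin d)) (η : ℝ),
      (∫ ξ in Set.Icc (0:ℝ) 1,
        (θ - (if ξ ≤ U θ then η • gradient l θ else 0)))
        = θ - η • gradient ltil θ :=
  stmt0_general l ltil U hU hgrad
end

section
/- Let q ∈ (0,1), p ∈ [0,1], l(q) = −p·log q − (1−p)·log(1−q) be the cross-entropy loss, and U(q) = −q·log q − (1−q)·log(1−q) the entropy uncertainty. Then the function l̃(q) = q·log q + (1−q)·log(1−q) − p·Li₂(q) − (1−p)·Li₂(1−q) + Li₂(1) satisfies dl̃/dq = U(q)·dl/dq for all q ∈ (0,1), where Li₂(z) = −∫₀^z log(1−u)/u du is Spence's function. -/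
/-!
Since `Li₂' z = -log (1 - z) / z`, differentiating `l̃` produces the terms `p log (1 - q) / q` and
`-(1 - p) log q / (1 - q)`; together with the derivative `log q - log (1 - q)` of the negative
entropy they recombine into `U(q) · ((1 - p) / (1 - q) - p / q) = U(q) · l'(q)`.
-/

open Real MeasureTheory

/-- Spence's function (dilogarithm): `Li₂(z) = -∫₀^z log(1-u)/u du`. -/
noncomputable def Li2 (z : ℝ) : ℝ := -∫ u in (0:ℝ)..z, Real.log (1 - u) / u

lemma abs_log_one_sub_div_le {u : ℝ} (hu : u < 1) : |log (1 - u) / u| ≤ 1 + (1 - u)⁻¹ := by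
  have h1u : 0 < 1 - u := by linarith
  rw [abs_div]
  rcases lt_trichotomy u 0 with hneg | rfl | hpos
  · have hlog : 0 ≤ log (1 - u) := log_nonneg (by linarith)
    have hle : log (1 - u) ≤ -u := by linarith [log_le_sub_one_of_pos h1u]
    rw [abs_of_nonneg hlog, abs_of_neg hneg, div_le_iff₀ (by linarith)]
    nlinarith [inv_pos.2 h1u]
  · simp
  · have hlog : log (1 - u) ≤ 0 := log_nonpos h1u.le (by linarith)
    have hle : -log (1 - u) ≤ u * (1 - u)⁻¹ := by
      have := one_sub_inv_le_log_of_pos h1u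
      have : (1 - u)⁻¹ * (1 - u) = 1 := inv_mul_cancel₀ h1u.ne'
      nlinarith
    rw [abs_of_nonpos hlog, abs_of_pos hpos, div_le_iff₀ hpos]
    nlinarith

lemma measurable_log_one_sub_div : Measurable fun u : ℝ => log (1 - u) / u := by
  fun_prop

lemma intervalIntegrable_log_one_sub_div {b : ℝ} (hb : b < 1) :
    IntervalIntegrable (fun u => log (1 - u) / u) volume 0 b := by
  have hbound : IntervalIntegrable (fun u : ℝ => 1 + (1 - u)⁻¹) volume 0 b := by
    refine ContinuousOn.intervalIntegrable fun u hu => ?_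
    have : u < 1 := by
      rcases Set.mem_uIcc.1 hu with h | h <;> linarith [h.2]
    have h1u : 1 - u ≠ 0 := by linarith
    exact ContinuousAt.continuousWithinAt (by fun_prop (disch := exact h1u))
  refine hbound.mono_fun' ?_ ?_
  · exact measurable_log_one_sub_div.aestronglyMeasurable
  · filter_upwards [ae_restrict_mem measurableSet_uIoc] with u hu
    have : u < 1 := by
      rcases Set.mem_uIoc.1 hu with h | h <;> linarith [h.2]
    exact abs_log_one_sub_div_le this

lemma hasDerivAt_Li2 {z : ℝ} (hz0 : z ≠ 0) (hz1 : z < 1) :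
    HasDerivAt Li2 (-(log (1 - z) / z)) z := by
  have h1z : 1 - z ≠ 0 := by linarith
  have hcont : ContinuousAt (fun u : ℝ => log (1 - u) / u) z := by
    fun_prop (disch := assumption)
  have hmeas : StronglyMeasurableAtFilter (fun u : ℝ => log (1 - u) / u) (nhds z) volume :=
    measurable_log_one_sub_div.stronglyMeasurable.stronglyMeasurableAtFilter
  exact (intervalIntegral.integral_hasDerivAt_right
    (intervalIntegrable_log_one_sub_div hz1) hmeas hcont).neg

lemma hasDerivAt_Li2_one_sub {z : ℝ} (hz0 : 0 < z) (hz1 : z ≠ 1) :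
    HasDerivAt (fun x => Li2 (1 - x)) (log z / (1 - z)) z := by
  have h : HasDerivAt (fun x => Li2 (1 - x)) (-(log (1 - (1 - z)) / (1 - z)) * -1) z :=
    (hasDerivAt_Li2 (sub_ne_zero.2 hz1.symm) (by linarith)).comp z ((hasDerivAt_id z).const_sub 1)
  rwa [sub_sub_cancel, neg_mul_neg, mul_one] at h

lemma mul_log_add_one_sub_mul_log_one_sub (x : ℝ) :
    x * log x + (1 - x) * log (1 - x) = -binEntropy x := by
  simp only [binEntropy, log_inv]
  ring

lemma hasDerivAt_crossEntropy (p : ℝ) {q : ℝ} (hq0 : q ≠ 0) (hq1 : q ≠ 1) :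
    HasDerivAt (fun x => -(p * log x) - (1 - p) * log (1 - x)) ((1 - p) / (1 - q) - p / q) q := by
  have hlog := ((hasDerivAt_id' q).const_sub 1).log (sub_ne_zero.2 hq1.symm)
  refine (((hasDerivAt_log hq0).const_mul p).neg.sub (hlog.const_mul (1 - p))).congr_deriv ?_
  have : 1 - q ≠ 0 := sub_ne_zero.2 hq1.symm
  field_simp
  ring

theorem stmt1_general (p : ℝ) :
    ∀ q ∈ Set.Ioo (0:ℝ) 1,
      deriv (fun q : ℝ =>
          q * Real.log q + (1 - q) * Real.log (1 - q)
            - p * Li2 q - (1 - p) * Li2 (1 - q) + Li2 1) q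
        = (-(q * Real.log q + (1 - q) * Real.log (1 - q)))
            * deriv (fun q : ℝ => -(p * Real.log q) - (1 - p) * Real.log (1 - q)) q := by
  rintro q ⟨hq0, hq1⟩
  have hq1' : q ≠ 1 := hq1.ne
  have hloss : HasDerivAt (fun x => x * log x + (1 - x) * log (1 - x)
      - p * Li2 x - (1 - p) * Li2 (1 - x) + Li2 1)
      (-(log (1 - q) - log q) - p * -(log (1 - q) / q) - (1 - p) * (log q / (1 - q))) q := by
    simp only [mul_log_add_one_sub_mul_log_one_sub]
    exact (((hasDerivAt_binEntropy hq0.ne' hq1').neg.sub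
      ((hasDerivAt_Li2 hq0.ne' hq1).const_mul p)).sub
      ((hasDerivAt_Li2_one_sub hq0 hq1').const_mul (1 - p))).add_const (Li2 1)
  rw [hloss.deriv, (hasDerivAt_crossEntropy p hq0.ne' hq1').deriv]
  have h1q : 1 - q ≠ 0 := sub_ne_zero.2 hq1'.symm
  field_simp
  ring

/-- The equivalent loss of the cross-entropy loss under the entropy uncertainty:
`dl̃/dq = U(q) · dl/dq` on `(0,1)`. -/
theorem stmt1 (p : ℝ) (hp : p ∈ Set.Icc (0:ℝ) 1) :
    ∀ q ∈ Set.Ioo (0:ℝ) 1,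
      deriv (fun q : ℝ =>
          q * Real.log q + (1 - q) * Real.log (1 - q)
            - p * Li2 q - (1 - p) * Li2 (1 - q) + Li2 1) q
        = (-(q * Real.log q + (1 - q) * Real.log (1 - q)))
            * deriv (fun q : ℝ => -(p * Real.log q) - (1 - p) * Real.log (1 - q)) q :=
  stmt1_general p
end

section
/- Let q ∈ (0,1), p ∈ [0,1], l(q) = −p·log q − (1−p)·log(1−q), and U(q) = min{q, 1−q}. Then the piecewise function l̃(q) = −(1−p)·log(2(1−q)) − q + log 2 for q < 1/2, and l̃(q) = −p·log(2q) − (1−q) + log 2 for q ≥ 1/2, is continuous on (0,1) and satisfies dl̃/dq = U(q)·dl/dq at every q ≠ 1/2. -/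
/-!
Both branches of `ltilLC p` are differentiable wherever their logarithms are defined, and they
agree at `q = 1/2`, which gives continuity. The cross-entropy loss has derivative
`(q - p) / (q (1 - q))`, while the branch for `q < 1/2` has derivative `(q - p) / (1 - q)` and
the branch for `q ≥ 1/2` has derivative `(q - p) / q`: the loss derivative multiplied by `q`,
respectively by `1 - q`.
-/

/-- Equivalent loss of the cross-entropy loss under the least-confidence
uncertainty `U(q) = min{q, 1-q}`. -/
noncomputable def ltilLC (p : ℝ) (q : ℝ) : ℝ :=
  if q < 1/2 then -((1 - p) * Real.log (2 * (1 - q))) - q + Real.log 2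
  else -(p * Real.log (2 * q)) - (1 - q) + Real.log 2

open Real Filter Topology

namespace LeastConfidence

variable (p : ℝ) {q : ℝ}

theorem hasDerivAt_crossEntropy (h0 : 0 < q) (h1 : q < 1) :
    HasDerivAt (fun q : ℝ => -(p * log q) - (1 - p) * log (1 - q))
      ((q - p) / (q * (1 - q))) q := by
  have h1q : 1 - q ≠ 0 := by linarith
  have hlog : HasDerivAt (fun x : ℝ => log (1 - x)) ((1 - q)⁻¹ * (-1)) q :=
    (hasDerivAt_log h1q).comp q ((hasDerivAt_id q).const_sub 1)
  refine (((hasDerivAt_log h0.ne').const_mul p).neg.sub (hlog.const_mul (1 - p))).congr_deriv ?_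
  field_simp
  ring

theorem hasDerivAt_lowerBranch (h1 : q < 1) :
    HasDerivAt (fun q : ℝ => -((1 - p) * log (2 * (1 - q))) - q + log 2)
      ((q - p) / (1 - q)) q := by
  have h1q : 1 - q ≠ 0 := by linarith
  have hlog : HasDerivAt (fun x : ℝ => log (2 * (1 - x))) ((2 * (1 - q))⁻¹ * (2 * -1)) q :=
    (hasDerivAt_log (by positivity)).comp q (((hasDerivAt_id q).const_sub 1).const_mul 2)
  refine (((hlog.const_mul (1 - p)).neg.sub (hasDerivAt_id q)).add_const (log 2)).congr_deriv ?_
  field_simp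
  ring

theorem hasDerivAt_upperBranch (h0 : 0 < q) :
    HasDerivAt (fun q : ℝ => -(p * log (2 * q)) - (1 - q) + log 2) ((q - p) / q) q := by
  have hlog : HasDerivAt (fun x : ℝ => log (2 * x)) ((2 * q)⁻¹ * (2 * 1)) q :=
    (hasDerivAt_log (by positivity)).comp q ((hasDerivAt_id q).const_mul 2)
  refine (((hlog.const_mul p).neg.sub ((hasDerivAt_id q).const_sub 1)).add_const
    (log 2)).congr_deriv ?_
  field_simp
  ring

theorem continuousOn_ltilLC : ContinuousOn (ltilLC p) (Set.Ioo 0 1) := by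
  refine ContinuousOn.if ?_ ?_ ?_
  · intro q hq
    have hq : q ∈ frontier (Set.Iio (1 / 2 : ℝ)) := hq.2
    rw [frontier_Iio, Set.mem_singleton_iff] at hq
    norm_num [hq]
  · exact fun q hq => (hasDerivAt_lowerBranch p hq.1.2).continuousAt.continuousWithinAt
  · exact fun q hq => (hasDerivAt_upperBranch p hq.1.1).continuousAt.continuousWithinAt

theorem hasDerivAt_ltilLC (hq : q ∈ Set.Ioo 0 1) (hhalf : q ≠ 1 / 2) :
    HasDerivAt (ltilLC p) (min q (1 - q) * ((q - p) / (q * (1 - q)))) q := by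
  obtain ⟨h0, h1⟩ := hq
  have h1q : 1 - q ≠ 0 := by linarith
  rcases hhalf.lt_or_gt with h | h
  · have hbranch : ltilLC p =ᶠ[𝓝 q] fun q => -((1 - p) * log (2 * (1 - q))) - q + log 2 := by
      filter_upwards [eventually_lt_nhds h] with x hx
      simp only [ltilLC, if_pos hx]
    refine ((hasDerivAt_lowerBranch p h1).congr_of_eventuallyEq hbranch).congr_deriv ?_
    rw [min_eq_left (by linarith)]
    field_simp
  · have hbranch : ltilLC p =ᶠ[𝓝 q] fun q => -(p * log (2 * q)) - (1 - q) + log 2 := by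
      filter_upwards [eventually_gt_nhds h] with x hx
      simp only [ltilLC, if_neg (not_lt.mpr hx.le)]
    refine ((hasDerivAt_upperBranch p h0).congr_of_eventuallyEq hbranch).congr_deriv ?_
    rw [min_eq_right (by linarith)]
    field_simp

end LeastConfidence

open LeastConfidence in
theorem stmt2_general (p : ℝ) :
    ContinuousOn (ltilLC p) (Set.Ioo (0:ℝ) 1) ∧
    ∀ q ∈ Set.Ioo (0:ℝ) 1, q ≠ 1/2 →
      deriv (ltilLC p) q
        = min q (1 - q)
            * deriv (fun q : ℝ => -(p * Real.log q) - (1 - p) * Real.log (1 - q)) q :=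
  ⟨continuousOn_ltilLC p, fun q hq hhalf => by
    rw [(hasDerivAt_ltilLC p hq hhalf).deriv, (hasDerivAt_crossEntropy p hq.1 hq.2).deriv]⟩

theorem stmt2 (p : ℝ) (hp : p ∈ Set.Icc (0:ℝ) 1) :
    ContinuousOn (ltilLC p) (Set.Ioo (0:ℝ) 1) ∧
    ∀ q ∈ Set.Ioo (0:ℝ) 1, q ≠ 1/2 →
      deriv (ltilLC p) q
        = min q (1 - q)
            * deriv (fun q : ℝ => -(p * Real.log q) - (1 - p) * Real.log (1 - q)) q :=
  stmt2_general p
end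

section
/- Let μ > 0 and consider l̃(s) defined by (1/μ)·log(1−μs) + (1/μ)·log(1+μ) for s ≤ 0, −(1/μ)·log(1+μs) + (1/μ)·log(1+μ) for 0 < s < 1, and 0 for s ≥ 1. Then l̃ is continuous, satisfies l̃'(s) = −1/(1+μ|s|) for s < 1 (s ≠ 0), and l̃ is not convex on ℝ. -/
/-!
The three branches glue into the single formula
`μ⁻¹ log (1 - μ min(s, 0)) - μ⁻¹ log (1 + μ clamp(s, 0, 1)) + μ⁻¹ log (1 + μ)`,
which is continuous because both logarithms have arguments `≥ 1`. Away from `0` and `1`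
each branch is `y ↦ μ⁻¹ log (1 + μ y)`, with derivative `1 / (1 + μ y)`, composed with
`s ↦ ±s`. On `s ≤ 0` the loss is `μ⁻¹ log (1 - μ s)` plus a constant, so it inherits the
strict concavity of `log`; at the midpoint `-1` of `-2` and `0` this contradicts convexity.
-/

/-- Equivalent loss of the hinge loss under the margin-based uncertainty
`U_μ(s) = 1/(1+μ|s|)`. -/
noncomputable def ltilHinge (μ : ℝ) (s : ℝ) : ℝ :=
  if s ≤ 0 then (1/μ) * Real.log (1 - μ*s) + (1/μ) * Real.log (1 + μ)
  else if s < 1 then -((1/μ) * Real.log (1 + μ*s)) + (1/μ) * Real.log (1 + μ)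
  else 0

open Real Set Filter Topology

lemma ltilHinge_of_nonpos {μ s : ℝ} (hs : s ≤ 0) :
    ltilHinge μ s = (1/μ) * log (1 - μ*s) + (1/μ) * log (1 + μ) :=
  if_pos hs

lemma ltilHinge_of_pos_of_lt_one {μ s : ℝ} (hs₀ : 0 < s) (hs₁ : s < 1) :
    ltilHinge μ s = -((1/μ) * log (1 + μ*s)) + (1/μ) * log (1 + μ) := by
  rw [ltilHinge, if_neg hs₀.not_ge, if_pos hs₁]

lemma ltilHinge_eq_min_max (μ : ℝ) :
    ltilHinge μ = fun s =>
      (1/μ) * log (1 - μ * min s 0) - (1/μ) * log (1 + μ * min (max s 0) 1)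
        + (1/μ) * log (1 + μ) := by
  funext s
  rcases le_or_gt s 0 with h₀ | h₀
  · simp [ltilHinge_of_nonpos h₀, h₀]
  rcases lt_or_ge s 1 with h₁ | h₁
  · simp [ltilHinge_of_pos_of_lt_one h₀ h₁, h₀.le, h₁.le]
  · simp [ltilHinge, h₀.not_ge, h₁.not_gt, h₀.le, h₁]

theorem continuous_ltilHinge {μ : ℝ} (hμ : 0 < μ) : Continuous (ltilHinge μ) := by
  rw [ltilHinge_eq_min_max]
  have hleft (s : ℝ) : 1 - μ * min s 0 ≠ 0 := by
    nlinarith [min_le_right s 0]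
  have hright (s : ℝ) : 1 + μ * min (max s 0) 1 ≠ 0 := by
    nlinarith [le_min (le_max_right s 0) zero_le_one]
  fun_prop (disch := exact hleft _ <|> exact hright _)

lemma hasDerivAt_inv_mul_log_one_add_mul {μ y : ℝ} (hμ : μ ≠ 0) (hy : 1 + μ*y ≠ 0) :
    HasDerivAt (fun y => (1/μ) * log (1 + μ*y)) (1 / (1 + μ*y)) y := by
  refine ((((hasDerivAt_id y).const_mul μ).const_add 1).log hy |>.const_mul (1/μ)).congr_deriv ?_
  simp only [id]
  field_simp

theorem hasDerivAt_ltilHinge {μ s : ℝ} (hμ : 0 < μ) (hs₁ : s < 1) (hs₀ : s ≠ 0) :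
    HasDerivAt (ltilHinge μ) (-(1 / (1 + μ * |s|))) s := by
  rcases hs₀.lt_or_gt with hneg | hpos
  · have hloc : ltilHinge μ =ᶠ[𝓝 s]
        fun x => (1/μ) * log (1 + μ*(-x)) + (1/μ) * log (1 + μ) := by
      filter_upwards [Iio_mem_nhds hneg] with x hx
      rw [ltilHinge_of_nonpos hx.le, mul_neg, sub_eq_add_neg]
    have hd := ((hasDerivAt_inv_mul_log_one_add_mul (y := -s) hμ.ne' (by nlinarith)).comp s
      (hasDerivAt_neg s)).add_const ((1/μ) * log (1 + μ))
    rw [abs_of_neg hneg]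
    exact (hd.congr_of_eventuallyEq hloc).congr_deriv (by simp)
  · have hloc : ltilHinge μ =ᶠ[𝓝 s]
        fun x => -((1/μ) * log (1 + μ*x)) + (1/μ) * log (1 + μ) := by
      filter_upwards [Ioo_mem_nhds hpos hs₁] with x hx
      rw [ltilHinge_of_pos_of_lt_one hx.1 hx.2]
    have hd := (hasDerivAt_inv_mul_log_one_add_mul (y := s) hμ.ne' (by nlinarith)).neg.add_const
      ((1/μ) * log (1 + μ))
    rw [abs_of_pos hpos]
    exact hd.congr_of_eventuallyEq hloc

theorem not_convexOn_ltilHinge {μ : ℝ} (hμ : 0 < μ) : ¬ ConvexOn ℝ univ (ltilHinge μ) := by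
  intro hconv
  have hmid : (1/μ) * log (1 + μ) ≤ 1/2 * ((1/μ) * log (1 + 2*μ)) := by
    have := hconv.2 (mem_univ (-2)) (mem_univ 0) (by norm_num : (0:ℝ) ≤ 1/2)
      (by norm_num : (0:ℝ) ≤ 1/2) (by norm_num)
    rw [ltilHinge_of_nonpos (by norm_num), ltilHinge_of_nonpos (by norm_num),
      ltilHinge_of_nonpos (by norm_num)] at this
    norm_num [show 1 + μ * 2 = 1 + 2 * μ by ring] at this ⊢
    linarith
  have hlog : 1/2 * log (1 + 2*μ) < log (1 + μ) := by
    have := strictConcaveOn_log_Ioi.2 (mem_Ioi.2 one_pos) (mem_Ioi.2 (by linarith : 0 < 1 + 2*μ))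
      (by linarith) (by norm_num : (0:ℝ) < 1/2) (by norm_num : (0:ℝ) < 1/2) (by norm_num)
    norm_num at this
    rwa [show (1:ℝ)/2 + 1/2 * (1 + 2*μ) = 1 + μ by ring] at this
  have := mul_lt_mul_of_pos_left hlog (one_div_pos.2 hμ)
  linarith

theorem stmt8 (μ : ℝ) (hμ : 0 < μ) :
    Continuous (ltilHinge μ) ∧
    (∀ s : ℝ, s < 1 → s ≠ 0 → deriv (ltilHinge μ) s = -(1 / (1 + μ * |s|))) ∧
    ¬ ConvexOn ℝ Set.univ (ltilHinge μ) :=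
  ⟨continuous_ltilHinge hμ, fun _ hs₁ hs₀ => (hasDerivAt_ltilHinge hμ hs₁ hs₀).deriv,
    not_convexOn_ltilHinge hμ⟩
end

section
/- Let 0 < μ < 1 and define l̃_μ(s) = (1/(1+μ))·exp(−(1+μ)s) + μ/(1+μ) for s ≥ 0 and l̃_μ(s) = (1/(1−μ))·exp(−(1−μ)s) − μ/(1−μ) for s < 0. Then l̃_μ is C¹ on ℝ, convex, and satisfies l̃_μ'(s) = −exp(−μ|s|)·exp(−s) for all s ∈ ℝ, i.e., it is the equivalent loss of the exponential loss l(s) = exp(−s) under the exponential uncertainty U_μ(s) = exp(−μ|s|). -/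
/-- Equivalent loss of the exponential loss under the exponential uncertainty
`U_μ(s) = exp(-μ|s|)`. -/
noncomputable def ltilExp (μ : ℝ) (s : ℝ) : ℝ :=
  if 0 ≤ s then (1/(1+μ)) * Real.exp (-(1+μ)*s) + μ/(1+μ)
  else (1/(1-μ)) * Real.exp (-(1-μ)*s) - μ/(1-μ)

/-! The two branches of `ltilExp μ` have derivatives `-exp (-(1 ± μ) s)`, which agree at the
break point `0` with each other and with `-exp (-μ|s|) exp (-s)`; gluing them gives the derivative
everywhere. Since `|μ| ≤ 1`, the map `s ↦ μ|s| + s` is monotone, so this derivative is monotone and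
`ltilExp μ` is convex. -/

open Real Set

theorem hasDerivAt_ite_le {E : Type*} [NormedAddCommGroup E] [NormedSpace ℝ E] {g h : ℝ → E} {g' h' : ℝ → E} {a : ℝ}
    (hg : ∀ x, HasDerivAt g (g' x) x) (hh : ∀ x, HasDerivAt h (h' x) x)
    (hgh : g a = h a) (hgh' : g' a = h' a) (x : ℝ) :
    HasDerivAt (fun s => if a ≤ s then g s else h s) (if a ≤ x then g' x else h' x) x := by
  rcases lt_trichotomy x a with hx | rfl | hx
  · have heq : (fun s => if a ≤ s then g s else h s) =ᶠ[nhds x] h := by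
      filter_upwards [Iio_mem_nhds hx] with s hs
      simp [not_le.mpr (mem_Iio.mp hs)]
    simpa [not_le.mpr hx] using (hh x).congr_of_eventuallyEq heq
  · have hright : HasDerivWithinAt (fun s => if x ≤ s then g s else h s) (g' x) (Ici x) x :=
      (hg x).hasDerivWithinAt.congr (fun s hs => if_pos (mem_Ici.mp hs)) (if_pos le_rfl)
    have hleft : HasDerivWithinAt (fun s => if x ≤ s then g s else h s) (g' x) (Iic x) x := by
      rw [hgh']
      refine (hh x).hasDerivWithinAt.congr (fun s hs => ?_) (by simp [hgh])
      rcases (mem_Iic.mp hs).lt_or_eq with hs | rfl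
      · exact if_neg (not_le.mpr hs)
      · simp [hgh]
    have := hleft.union hright
    rw [Iic_union_Ici, hasDerivWithinAt_univ] at this
    rwa [if_pos le_rfl]
  · have heq : (fun s => if a ≤ s then g s else h s) =ᶠ[nhds x] g := by
      filter_upwards [Ioi_mem_nhds hx] with s hs
      simp [(mem_Ioi.mp hs).le]
    simpa [hx.le] using (hg x).congr_of_eventuallyEq heq

theorem hasDerivAt_one_div_mul_exp_neg_mul {a : ℝ} (ha : a ≠ 0) (x : ℝ) :
    HasDerivAt (fun s => 1 / a * exp (-a * s)) (-exp (-a * x)) x := by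
  refine ((((hasDerivAt_id' x).const_mul (-a)).exp).const_mul (1 / a)).congr_deriv ?_
  field_simp

theorem ltilExp_hasDerivAt {μ : ℝ} (h₁ : -1 < μ) (h₂ : μ < 1) (s : ℝ) :
    HasDerivAt (ltilExp μ) (-(exp (-μ * |s|) * exp (-s))) s := by
  have hadd : 1 + μ ≠ 0 := by linarith
  have hsub : 1 - μ ≠ 0 := by linarith
  have hglued := hasDerivAt_ite_le (a := 0)
    (fun x => (hasDerivAt_one_div_mul_exp_neg_mul hadd x).add_const (μ / (1 + μ)))
    (fun x => (hasDerivAt_one_div_mul_exp_neg_mul hsub x).sub_const (μ / (1 - μ)))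
    (by simp only [mul_zero, exp_zero]; field_simp) (by simp) s
  refine hglued.congr_deriv ?_
  rw [← exp_add]
  split_ifs with hs
  · rw [abs_of_nonneg hs]; ring_nf
  · rw [abs_of_neg (not_le.mp hs)]; ring_nf

theorem monotone_mul_abs_add {μ : ℝ} (h₁ : -1 ≤ μ) (h₂ : μ ≤ 1) :
    Monotone fun s : ℝ => μ * |s| + s := by
  intro x y hxy
  rcases abs_cases x with ⟨hx, _⟩ | ⟨hx, _⟩ <;>
    rcases abs_cases y with ⟨hy, _⟩ | ⟨hy, _⟩ <;> simp only [hx, hy] <;> nlinarith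

theorem monotone_neg_exp_neg_mul_abs_mul_exp_neg {μ : ℝ} (h₁ : -1 ≤ μ) (h₂ : μ ≤ 1) :
    Monotone fun s : ℝ => -(exp (-μ * |s|) * exp (-s)) := by
  have : (fun s : ℝ => -(exp (-μ * |s|) * exp (-s))) = fun s => -exp (-(μ * |s| + s)) := by
    funext s; rw [← exp_add]; ring_nf
  rw [this]
  exact (exp_monotone.comp_antitone (monotone_mul_abs_add h₁ h₂).neg).neg

theorem stmt10 (μ : ℝ) (hμ0 : 0 < μ) (hμ1 : μ < 1) :
    ContDiff ℝ 1 (ltilExp μ) ∧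
    ConvexOn ℝ Set.univ (ltilExp μ) ∧
    ∀ s : ℝ, HasDerivAt (ltilExp μ) (-(Real.exp (-μ*|s|) * Real.exp (-s))) s := by
  have hderiv := ltilExp_hasDerivAt (by linarith) hμ1
  have hdiff : Differentiable ℝ (ltilExp μ) := fun s => (hderiv s).differentiableAt
  have hderiv_eq : deriv (ltilExp μ) = fun s => -(exp (-μ * |s|) * exp (-s)) :=
    funext fun s => (hderiv s).deriv
  refine ⟨contDiff_one_iff_deriv.2 ⟨hdiff, hderiv_eq ▸ by fun_prop⟩, ?_, hderiv⟩
  exact Monotone.convexOn_univ_of_deriv hdiff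
    (hderiv_eq ▸ monotone_neg_exp_neg_mul_abs_mul_exp_neg (by linarith) hμ1.le)
end

section
/- Let U(θ;X) = exp(L(θ;X)) where L(θ;X_i) = l(θ;(X_i,Y_i)) is differentiable in θ. If at each step an index i_t ∈ [n] is sampled with probability exp(l(θ_t;(X_i,Y_i))) / Σ_j exp(l(θ_t;(X_j,Y_j))) and the gradient g_t = ∇_θ l(θ_t;(X_{i_t},Y_{i_t})) is taken, then E[g_t | θ_t] = ∇_θ log(Σ_{i=1}^n exp(l(θ_t;(X_i,Y_i)))), i.e., the procedure performs stochastic gradient descent on the log-sum-exp of the losses. -/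
/-! By the chain rule, `∇ log Σᵢ exp lᵢ = (Σᵢ exp lᵢ • ∇lᵢ) / Σⱼ exp lⱼ`, and the weights
`exp lᵢ / Σⱼ exp lⱼ` are exactly the softmax sampling probabilities. -/

open Real

noncomputable def softmax {ι : Type*} [Fintype ι] (z : ι → ℝ) (i : ι) : ℝ :=
  exp (z i) / ∑ j, exp (z j)

section LogSumExp

variable {ι E : Type*} [Fintype ι] [Nonempty ι] {f : ι → E → ℝ} {x : E}

theorem hasFDerivAt_log_sum_exp [NormedAddCommGroup E] [NormedSpace ℝ E]
    {f' : ι → StrongDual ℝ E} (hf : ∀ i, HasFDerivAt (f i) (f' i) x) :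
    HasFDerivAt (fun y => log (∑ i, exp (f i y)))
      (∑ i, softmax (fun j => f j x) i • f' i) x := by
  have hsum_pos : 0 < ∑ j, exp (f j x) :=
    Finset.sum_pos (fun i _ => exp_pos _) Finset.univ_nonempty
  have hsum : HasFDerivAt (fun y => ∑ i, exp (f i y)) (∑ i, exp (f i x) • f' i) x :=
    HasFDerivAt.fun_sum fun i _ => (hf i).exp
  convert hsum.log hsum_pos.ne' using 1
  simp only [softmax, Finset.smul_sum, smul_smul, div_eq_inv_mul]

theorem hasGradientAt_log_sum_exp [NormedAddCommGroup E] [InnerProductSpace ℝ E]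
    [CompleteSpace E] {g : ι → E} (hf : ∀ i, HasGradientAt (f i) (g i) x) :
    HasGradientAt (fun y => log (∑ i, exp (f i y)))
      (∑ i, softmax (fun j => f j x) i • g i) x := by
  rw [hasGradientAt_iff_hasFDerivAt, map_sum]
  simpa only [map_smul] using hasFDerivAt_log_sum_exp fun i => (hf i).hasFDerivAt

end LogSumExp

/-- Exponential-loss-as-uncertainty pool-based sampling performs SGD on the
log-sum-exp of the losses: the softmax-weighted expected gradient equals the
gradient of `log Σᵢ exp(l(θ;(Xᵢ,Yᵢ)))`. -/
theorem stmt18 {d n : ℕ} (hn : 0 < n)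
    (l : EuclideanSpace ℝ (Fin d) → Fin n → ℝ)
    (hl : ∀ i, Differentiable ℝ (fun θ => l θ i))
    (θ : EuclideanSpace ℝ (Fin d)) :
    ∑ i, (Real.exp (l θ i) / ∑ j, Real.exp (l θ j))
        • gradient (fun θ' => l θ' i) θ
      = gradient (fun θ' => Real.log (∑ i, Real.exp (l θ' i))) θ := by
  have : Nonempty (Fin n) := ⟨⟨0, hn⟩⟩
  exact (hasGradientAt_log_sum_exp fun i => (hl i θ).hasGradientAt).gradient.symm
end
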